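/- arXiv:1405.1545 — 3 statements merged into one kernel-verified Lean document; each statement's English description precedes it below -/
import Mathlib

section
/- Let C be a finite set with maps p : C → V and q : C → F to finite sets V and F, with F nonempty, and let θ : C → ℝ. For D ∈ F let k(D) be the number of c ∈ C with q(c) = D, and assume k(D) ≥ 3 for all D ∈ F. Suppose that for every v ∈ V the sum of θ(c) over all c with p(c) = v equals 2π, and that for every D ∈ F the sum of θ(c) over all c with q(c) = D is strictly less than (k(D) − 2)π. Then 2·(|V| + |F|) < Σ_{D∈F} k(D). -/
open Real
open scoped Classical

/-! Summing the angles `θ` over all corners, first vertex by vertex and then face by face, gives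
`2π |V| = Σ θ < Σ_D (k D - 2) π`; dividing by `π` this is `2 |V| < Σ_D k D - 2 |F|`. -/

open Finset

section FiberSums

variable {ι κ M : Type*} [Fintype ι] [Fintype κ]

theorem sum_eq_card_nsmul_of_fiber_sums_eq [AddCommMonoid M] (f : ι → κ) (g : ι → M) (a : M)
    (h : ∀ y, ∑ x ∈ univ.filter (fun x => f x = y), g x = a) :
    ∑ x, g x = Fintype.card κ • a := by
  rw [← sum_fiberwise univ f g]
  simp only [h, sum_const, card_univ]

theorem sum_lt_sum_of_fiber_sums_lt [Nonempty κ] [AddCommMonoid M] [PartialOrder M]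
    [IsOrderedCancelAddMonoid M] (f : ι → κ) (g : ι → M) (b : κ → M)
    (h : ∀ y, ∑ x ∈ univ.filter (fun x => f x = y), g x < b y) :
    ∑ x, g x < ∑ y, b y := by
  rw [← sum_fiberwise univ f g]
  exact sum_lt_sum_of_nonempty univ_nonempty fun y _ => h y

end FiberSums

theorem combinatorial_negative_euler_characteristic_general
    {C V F : Type*} [Fintype C] [Fintype V] [Fintype F] [Nonempty F]
    (p : C → V) (q : C → F) (θ : C → ℝ) (k : F → ℕ)
    (hvtx : ∀ v, ∑ c ∈ Finset.univ.filter (fun c => p c = v), θ c = 2 * π)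
    (hface : ∀ D, ∑ c ∈ Finset.univ.filter (fun c => q c = D), θ c
        < ((k D : ℝ) - 2) * π) :
    2 * (Fintype.card V + Fintype.card F) < ∑ D : F, k D := by
  have hvertices := sum_eq_card_nsmul_of_fiber_sums_eq p θ _ hvtx
  have hfaces := sum_lt_sum_of_fiber_sums_lt q θ _ hface
  have hπ : (2 * Fintype.card V : ℝ) * π < (∑ D, (k D : ℝ) - 2 * Fintype.card F) * π := by
    simp only [hvertices, nsmul_eq_mul, ← sum_mul, sum_sub_distrib, sum_const, card_univ,
      nsmul_eq_mul, mul_comm (2 : ℝ)] at hfaces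
    linarith
  have := lt_of_mul_lt_mul_right hπ pi_pos.le
  exact_mod_cast (by linarith : (2 * (Fintype.card V + Fintype.card F) : ℝ) < ∑ D, (k D : ℝ))

/-- If `C` is a finite set of corners with vertex map `p : C → V` and face map
`q : C → F` (`F` nonempty), `θ` assigns an angle to each corner, each face `D`
has `k D ≥ 3` corners, the angles around each vertex sum to `2π`, and the angles
of each face `D` sum to strictly less than `(k D − 2)π`, then
`2(|V| + |F|) < Σ_D k(D)`, i.e. the Euler characteristic is negative. -/
theorem combinatorial_negative_euler_characteristic
    {C V F : Type*} [Fintype C] [Fintype V] [Fintype F] [Nonempty F]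
    (p : C → V) (q : C → F) (θ : C → ℝ) (k : F → ℕ)
    (hk : ∀ D, k D = (Finset.univ.filter fun c => q c = D).card)
    (hk3 : ∀ D, 3 ≤ k D)
    (hvtx : ∀ v, ∑ c ∈ Finset.univ.filter (fun c => p c = v), θ c = 2 * π)
    (hface : ∀ D, ∑ c ∈ Finset.univ.filter (fun c => q c = D), θ c
        < ((k D : ℝ) - 2) * π) :
    2 * (Fintype.card V + Fintype.card F) < ∑ D : F, k D :=
  combinatorial_negative_euler_characteristic_general p q θ k hvtx hface
end

section
/- Let C be a finite set with maps p : C → V and q : C → F to finite sets V and F, and let θ : C → ℝ. For D ∈ F let k(D) be the number of c ∈ C with q(c) = D, and assume k(D) ≥ 3 for all D ∈ F. Suppose that for every v ∈ V the sum of θ(c) over all c with p(c) = v equals 2π, and that for every D ∈ F the sum of θ(c) over all c with q(c) = D is at most (k(D) − 2)π. Then 2·(|V| + |F|) ≤ Σ_{D∈F} k(D), and equality holds if and only if for every D ∈ F the sum of θ(c) over all c with q(c) = D equals exactly (k(D) − 2)π. -/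
/-!
Count the total angle `∑ c, θ c` twice. Grouped by vertices it is `2π |V|`; grouped by faces it is
at most `∑ D, (k D - 2) π = π (∑ D, k D - 2 |F|)`. Hence the total angle defect
`∑ D, ((k D - 2) π - ∑_{q c = D} θ c)`, a sum of nonnegative terms, equals
`π (∑ D, k D - 2 (|V| + |F|))`: it is nonnegative, and it vanishes iff every face has defect zero.
-/

open Real Finset

theorem sum_eq_card_nsmul_of_fiberwise_sum_eq {ι κ M : Type*} [Fintype ι] [Fintype κ]
    [DecidableEq κ] [AddCommMonoid M] (g : ι → κ) (f : ι → M) (a : M)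
    (h : ∀ j, ∑ i ∈ univ.filter (fun i => g i = j), f i = a) :
    ∑ i, f i = Fintype.card κ • a := by
  rw [← sum_fiberwise univ g f, sum_congr rfl fun j _ => h j, sum_const, card_univ]

theorem sum_face_angle_defect_eq {C V F : Type*} [Fintype C] [Fintype V] [Fintype F]
    [DecidableEq V] [DecidableEq F] (p : C → V) (q : C → F) (θ : C → ℝ) (k : F → ℕ)
    (hvtx : ∀ v, ∑ c ∈ univ.filter (fun c => p c = v), θ c = 2 * π) :
    ∑ D, (((k D : ℝ) - 2) * π - ∑ c ∈ univ.filter (fun c => q c = D), θ c)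
      = π * (((∑ D, k D : ℕ) : ℝ) - ((2 * (Fintype.card V + Fintype.card F) : ℕ) : ℝ)) := by
  rw [sum_sub_distrib, sum_fiberwise univ q θ,
    sum_eq_card_nsmul_of_fiberwise_sum_eq p θ _ hvtx, nsmul_eq_mul]
  simp only [sub_mul, sum_sub_distrib, ← sum_mul, sum_const, card_univ, nsmul_eq_mul]
  push_cast
  ring

open scoped Classical

theorem combinatorial_nonpositive_euler_characteristic_general
    {C V F : Type*} [Fintype C] [Fintype V] [Fintype F]
    (p : C → V) (q : C → F) (θ : C → ℝ) (k : F → ℕ)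
    (hvtx : ∀ v, ∑ c ∈ Finset.univ.filter (fun c => p c = v), θ c = 2 * π)
    (hface : ∀ D, ∑ c ∈ Finset.univ.filter (fun c => q c = D), θ c
        ≤ ((k D : ℝ) - 2) * π) :
    2 * (Fintype.card V + Fintype.card F) ≤ ∑ D : F, k D ∧
      (2 * (Fintype.card V + Fintype.card F) = ∑ D : F, k D ↔
        ∀ D, ∑ c ∈ Finset.univ.filter (fun c => q c = D), θ c
          = ((k D : ℝ) - 2) * π) := by
  have hdefect := sum_face_angle_defect_eq p q θ k hvtx
  have hnonneg : ∀ D ∈ univ, 0 ≤ ((k D : ℝ) - 2) * π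
      - ∑ c ∈ univ.filter (fun c => q c = D), θ c := fun D _ => sub_nonneg.2 (hface D)
  constructor
  · have h := hdefect ▸ sum_nonneg hnonneg
    exact_mod_cast sub_nonneg.1 ((mul_nonneg_iff_of_pos_left pi_pos).1 h)
  · rw [← Nat.cast_inj (R := ℝ), eq_comm, ← sub_eq_zero, ← mul_eq_zero_iff_left pi_ne_zero,
      ← hdefect, sum_eq_zero_iff_of_nonneg hnonneg]
    simp only [mem_univ, true_implies, sub_eq_zero]
    exact forall_congr' fun _ => eq_comm

/-- If `C` is a finite set of corners with vertex map `p : C → V` and face map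
`q : C → F`, `θ` assigns an angle to each corner, each face `D` has `k D ≥ 3`
corners, the angles around each vertex sum to `2π`, and the angles of each face
`D` sum to at most `(k D − 2)π`, then `2(|V| + |F|) ≤ Σ_D k(D)`, with equality
iff every face attains angle sum exactly `(k D − 2)π`. -/
theorem combinatorial_nonpositive_euler_characteristic
    {C V F : Type*} [Fintype C] [Fintype V] [Fintype F]
    (p : C → V) (q : C → F) (θ : C → ℝ) (k : F → ℕ)
    (hk : ∀ D, k D = (Finset.univ.filter fun c => q c = D).card)
    (hk3 : ∀ D, 3 ≤ k D)
    (hvtx : ∀ v, ∑ c ∈ Finset.univ.filter (fun c => p c = v), θ c = 2 * π)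
    (hface : ∀ D, ∑ c ∈ Finset.univ.filter (fun c => q c = D), θ c
        ≤ ((k D : ℝ) - 2) * π) :
    2 * (Fintype.card V + Fintype.card F) ≤ ∑ D : F, k D ∧
      (2 * (Fintype.card V + Fintype.card F) = ∑ D : F, k D ↔
        ∀ D, ∑ c ∈ Finset.univ.filter (fun c => q c = D), θ c
          = ((k D : ℝ) - 2) * π) :=
  combinatorial_nonpositive_euler_characteristic_general p q θ k hvtx hface
end

section
/- Let C be a finite set with a map p : C → E to a finite set E, and let β : C → ℝ with 0 ≤ β(c) ≤ π for all c. For e ∈ E let m(e), n(e), k(e) be the numbers of c with p(c) = e and β(c) = 0, β(c) = π, 0 < β(c) < π respectively; assume k(e) ≥ 1 for every e ∈ E, and that for every e ∈ E the sum of β(c) over all c with p(c) = e equals 2π. Let S be a finite family of triples (c_1, c_2, c_3) of elements of C such that each triple either satisfies 0 < β(c_i) < π for i = 1, 2, 3 and β(c_1) + β(c_2) + β(c_3) < π, or satisfies {β(c_1), β(c_2), β(c_3)} = {0, 0, π} as a multiset. For t > 0 define α_t : C → ℝ by α_t(c) = t if β(c) = 0, α_t(c) = π − 3t if β(c) = π,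 and α_t(c) = β(c) − ((m(p(c)) − 3·n(p(c)))/k(p(c)))·t if 0 < β(c) < π. Then there exists t_0 > 0 such that for all t with 0 < t < t_0: (i) α_t(c) > 0 for every c ∈ C; (ii) for every e ∈ E the sum of α_t(c) over all c with p(c) = e equals 2π; and (iii) for every triple (c_1, c_2, c_3) ∈ S, α_t(c_1) + α_t(c_2) + α_t(c_3) < π. -/
open Real
open scoped Classical

/-!
Every deformed angle is affine in `t`: `α t c = β c + t * v c`, where the velocity `v c` is `1`
at a flat angle `0`, `-3` at a flat angle `π`, and `-(m - 3n)/k` at a hyperideal angle of the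
same edge. The velocities around an edge sum to `m - 3n - k · (m - 3n)/k = 0`, so the edge
equations hold for every `t`. Each remaining inequality compares two affine functions of `t`
that are lexicographically ordered at `t = 0` (by value, then by slope): positivity is strict at
`t = 0` except at flat angles `0`, which move with slope `1`, and a face inequality is strict at
`t = 0` except at flat faces `{0, 0, π}`, whose angle sum moves with slope `1 + 1 - 3 = -1`.
-/

open Filter Topology Finset

theorem eventually_nhdsGT_add_mul_lt_add_mul {a b d d' : ℝ} (h : a < b ∨ a = b ∧ d < d') :
    ∀ᶠ t in 𝓝[>] 0, a + t * d < b + t * d' := by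
  rcases h with hab | ⟨rfl, hd⟩
  · refine eventually_nhdsWithin_of_eventually_nhds (ContinuousAt.eventually_lt ?_ ?_ ?_)
    · fun_prop
    · fun_prop
    · simpa using hab
  · filter_upwards [self_mem_nhdsWithin] with t (ht : 0 < t)
    gcongr

theorem exists_pos_forall_lt_of_eventually_nhdsGT {P : ℝ → Prop}
    (h : ∀ᶠ t in 𝓝[>] 0, P t) :
    ∃ t₀ > 0, ∀ t, 0 < t → t < t₀ → P t := by
  obtain ⟨t₀, ht₀, hsub⟩ := mem_nhdsGT_iff_exists_Ioo_subset.mp h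
  exact ⟨t₀, ht₀, fun t ht htt₀ => hsub ⟨ht, htt₀⟩⟩

theorem multiset_triple_sum_map_eq {α M : Type*} [AddCommMonoid M] {x y z a b c : α}
    (h : ({x, y, z} : Multiset α) = {a, b, c}) (f : α → M) :
    f x + f y + f z = f a + f b + f c := by
  simpa [add_assoc] using congrArg (fun s => (s.map f).sum) h

/-- `d/dt` of the deformed angle with initial value `x`, when the hyperideal angles at its edge
move at velocity `-M`. -/
noncomputable def angleVelocity (M x : ℝ) : ℝ :=
  if x = 0 then 1 else if x = π then -3 else -M

theorem ite_deformation_eq_add_mul_angleVelocity (M x t : ℝ) :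
    (if x = 0 then t else if x = π then π - 3 * t else x - M * t) =
      x + t * angleVelocity M x := by
  unfold angleVelocity
  split_ifs <;> subst_vars <;> ring

theorem angleVelocity_of_flat {x : ℝ} (hx : x = 0 ∨ x = π) (M M' : ℝ) :
    angleVelocity M x = angleVelocity M' x := by
  rcases hx with rfl | rfl <;> simp [angleVelocity]

theorem angleVelocity_flat_triple {x y z : ℝ} (h : ({x, y, z} : Multiset ℝ) = {0, 0, π})
    (M₁ M₂ M₃ : ℝ) :
    angleVelocity M₁ x + angleVelocity M₂ y + angleVelocity M₃ z = -1 := by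
  have flat : ∀ w ∈ ({x, y, z} : Multiset ℝ), w = 0 ∨ w = π := by
    rw [h]; simp
  rw [angleVelocity_of_flat (flat x (by simp)) M₁ 0,
    angleVelocity_of_flat (flat y (by simp)) M₂ 0,
    angleVelocity_of_flat (flat z (by simp)) M₃ 0, multiset_triple_sum_map_eq h]
  norm_num [angleVelocity, pi_ne_zero]

theorem sum_angleVelocity {ι : Type*} (F : Finset ι) (β : ι → ℝ)
    (hβ : ∀ c ∈ F, 0 ≤ β c ∧ β c ≤ π) (M : ℝ) :
    ∑ c ∈ F, angleVelocity M (β c) =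
      (#{c ∈ F | β c = 0} : ℝ) - 3 * #{c ∈ F | β c = π}
        - #{c ∈ F | 0 < β c ∧ β c < π} * M := by
  simp only [natCast_card_filter, mul_sum, sum_mul, ← sum_sub_distrib]
  refine sum_congr rfl fun c hc => ?_
  rcases (hβ c hc).1.eq_or_lt with h0 | h0
  · simp [angleVelocity, ← h0, pi_ne_zero.symm]
  rcases (hβ c hc).2.eq_or_lt with hπ | hπ
  · simp [angleVelocity, hπ, pi_ne_zero]
  · simp [angleVelocity, h0, hπ, h0.ne', hπ.ne]

theorem eventually_pos_add_mul_angleVelocity {x : ℝ} (hx : 0 ≤ x) (M : ℝ) :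
    ∀ᶠ t in 𝓝[>] 0, 0 < x + t * angleVelocity M x := by
  have lex : 0 < x ∨ 0 = x ∧ 0 < angleVelocity M x := by
    rcases hx.lt_or_eq with h | rfl
    · exact .inl h
    · exact .inr ⟨rfl, by simp [angleVelocity]⟩
  simpa using eventually_nhdsGT_add_mul_lt_add_mul lex

theorem eventually_face_add_mul_angleVelocity_lt_pi {x y z : ℝ}
    (h : x + y + z < π ∨ ({x, y, z} : Multiset ℝ) = {0, 0, π}) (M₁ M₂ M₃ : ℝ) :
    ∀ᶠ t in 𝓝[>] 0, (x + t * angleVelocity M₁ x) + (y + t * angleVelocity M₂ y) +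
      (z + t * angleVelocity M₃ z) < π := by
  have lex : x + y + z < π ∨ x + y + z = π ∧
      angleVelocity M₁ x + angleVelocity M₂ y + angleVelocity M₃ z < 0 := by
    refine h.imp_right fun h => ⟨by simpa using multiset_triple_sum_map_eq h id, ?_⟩
    rw [angleVelocity_flat_triple h]
    norm_num
  filter_upwards [eventually_nhdsGT_add_mul_lt_add_mul lex] with t ht
  linarith

/-- Combinatorial form of Theorem 4.2: deforming the non-negative dihedral
angles `β` of a partially flat angled triangulation yields, for all sufficiently
small `t > 0`, an angle structure `α t`: all angles positive, angles around each
edge summing to `2π`, and the three angles of each external-face triple summing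
to less than `π`. -/
theorem partially_flat_deformation_angle_structure
    {C E : Type*} [Fintype C] [Fintype E]
    (p : C → E) (β : C → ℝ)
    (hβ : ∀ c, 0 ≤ β c ∧ β c ≤ π)
    (m n k : E → ℕ)
    (hm : ∀ e, m e = (Finset.univ.filter fun c => p c = e ∧ β c = 0).card)
    (hn : ∀ e, n e = (Finset.univ.filter fun c => p c = e ∧ β c = π).card)
    (hk : ∀ e, k e = (Finset.univ.filter fun c => p c = e ∧ 0 < β c ∧ β c < π).card)
    (hk1 : ∀ e, 1 ≤ k e)
    (hsum : ∀ e, ∑ c ∈ Finset.univ.filter (fun c => p c = e), β c = 2 * π)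
    (S : Finset (C × C × C))
    (hS : ∀ s ∈ S,
      ((0 < β s.1 ∧ β s.1 < π) ∧ (0 < β s.2.1 ∧ β s.2.1 < π) ∧
        (0 < β s.2.2 ∧ β s.2.2 < π) ∧ β s.1 + β s.2.1 + β s.2.2 < π) ∨
      (({β s.1, β s.2.1, β s.2.2} : Multiset ℝ) = ({0, 0, π} : Multiset ℝ)))
    (α : ℝ → C → ℝ)
    (hα : ∀ t c, α t c =
      if β c = 0 then t
      else if β c = π then π - 3 * t
      else β c - (((m (p c) : ℝ) - 3 * (n (p c) : ℝ)) / (k (p c) : ℝ)) * t) :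
    ∃ t₀ > 0, ∀ t, 0 < t → t < t₀ →
      (∀ c, 0 < α t c) ∧
      (∀ e, ∑ c ∈ Finset.univ.filter (fun c => p c = e), α t c = 2 * π) ∧
      (∀ s ∈ S, α t s.1 + α t s.2.1 + α t s.2.2 < π) := by
  have affine : ∀ t c, α t c = β c +
      t * angleVelocity (((m (p c) : ℝ) - 3 * (n (p c) : ℝ)) / (k (p c) : ℝ)) (β c) :=
    fun t c => by rw [hα, ite_deformation_eq_add_mul_angleVelocity]
  have velocity : ∀ e, ∑ c ∈ univ.filter (fun c => p c = e),
      angleVelocity (((m (p c) : ℝ) - 3 * (n (p c) : ℝ)) / (k (p c) : ℝ)) (β c) = 0 := by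
    intro e
    have hk0 : (k e : ℝ) ≠ 0 := Nat.cast_ne_zero.2 (Nat.one_le_iff_ne_zero.1 (hk1 e))
    rw [sum_congr rfl fun c hc => by rw [(mem_filter.1 hc).2],
      sum_angleVelocity _ β fun c _ => hβ c, filter_filter, filter_filter, filter_filter,
      ← hm, ← hn, ← hk]
    field_simp
    ring
  refine exists_pos_forall_lt_of_eventually_nhdsGT ?_
  filter_upwards [eventually_all.2 fun c => eventually_pos_add_mul_angleVelocity (hβ c).1 _,
    (eventually_all_finset S).2 fun s hs =>
      eventually_face_add_mul_angleVelocity_lt_pi ((hS s hs).imp_left (·.2.2.2)) _ _ _]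
    with t hpos hface
  refine ⟨fun c => affine t c ▸ hpos c, fun e => ?_,
    fun s hs => by simpa only [affine] using hface s hs⟩
  rw [sum_congr rfl fun c _ => affine t c, sum_add_distrib, ← mul_sum, hsum, velocity, mul_zero,
    add_zero]
end
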